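/- Let m ≥ 4 and let P_m^L = {(n/2^m, ω(n)) : n = 0,1,…,2^m−1}, where ω(n) = Σ_{i=1}^m ((e₁ + e₂ + ⋯ + e_i) mod 2)/2^i. Then disp(P_m^L) ≥ max_{k=2,…,m−2} ((2^{k+1}−1)/2^m)·(1/2^{k−1} − 1/2^m), and this maximum equals (1/2^m)(4 − 4/2^{m/2} + 1/2^m) if m is even and (1/2^m)(4 − 3/2^{(m−1)/2} + 1/2^m) if m is odd. -/
import Mathlib


/-- The set of areas of axis-parallel half-open boxes `[x1,y1) x [x2,y2)` inside `[0,1]^2`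
containing no point of `P`. -/
def emptyBoxAreas (P : Set (ℝ × ℝ)) : Set ℝ :=
  { A | ∃ x₁ y₁ x₂ y₂ : ℝ,
      0 ≤ x₁ ∧ x₁ ≤ y₁ ∧ y₁ ≤ 1 ∧ 0 ≤ x₂ ∧ x₂ ≤ y₂ ∧ y₂ ≤ 1 ∧
      (∀ p ∈ P, p ∉ Set.Ico x₁ y₁ ×ˢ Set.Ico x₂ y₂) ∧
      A = (y₁ - x₁) * (y₂ - x₂) }

/-- The dispersion of a point set `P ⊆ [0,1]^2`: the supremum of areas of empty
axis-parallel boxes. -/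
noncomputable def disp (P : Set (ℝ × ℝ)) : ℝ := sSup (emptyBoxAreas P)
/-- The `i`-th digit (1-based) of `n` in base `b`, with the convention that the
`0`-th digit is `0`. -/
def nthDigit (b n i : ℕ) : ℕ := if i = 0 then 0 else n / b ^ (i - 1) % b
/-- The map `ω(n) = Σ_{i=1}^m ((e₁ + e₂ + ⋯ + e_i) mod 2)/2^i`. -/
noncomputable def omegaMap (m n : ℕ) : ℝ :=
  ∑ i ∈ Finset.Icc 1 m,
    (((∑ j ∈ Finset.Icc 1 i, nthDigit 2 n j) % 2 : ℕ) : ℝ) / (2 : ℝ) ^ i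

def Tfun (n i : ℕ) : ℕ := (∑ j ∈ Finset.Icc 1 i, nthDigit 2 n j) % 2
def Ynat (m n : ℕ) : ℕ := ∑ i ∈ Finset.Icc 1 m, Tfun n i * 2^(m-i)

lemma geo_range (M : ℕ) : ∑ j ∈ Finset.range M, 2^j = 2^M - 1 := by
  induction M with
  | zero => simp
  | succ n ih => rw [Finset.sum_range_succ, ih]; have := Nat.one_le_two_pow (n := n); omega

lemma sum_Icc_pow (k m : ℕ) (h : k ≤ m) :
    ∑ i ∈ Finset.Icc (k+1) m, 2^(m-i) = 2^(m-k) - 1 := by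
  rw [← geo_range (m - k)]
  refine Finset.sum_nbij' (fun i => m - i) (fun j => m - j) ?_ ?_ ?_ ?_ ?_ <;>
    simp only [Finset.mem_Icc, Finset.mem_range] <;> intros <;> first | trivial | omega

lemma total_pow (m : ℕ) : ∑ i ∈ Finset.Icc 1 m, 2^(m-i) = 2^m - 1 := by
  simpa using sum_Icc_pow 0 m (Nat.zero_le m)

lemma dg_le_one (n j : ℕ) : nthDigit 2 n j ≤ 1 := by
  unfold nthDigit; split
  · omega
  · exact Nat.lt_succ_iff.mp (Nat.mod_lt _ (by norm_num))

lemma T_le_one (n i : ℕ) : Tfun n i ≤ 1 := Nat.lt_succ_iff.mp (Nat.mod_lt _ (by norm_num))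

lemma T_one (n : ℕ) : Tfun n 1 = n % 2 := by
  simp [Tfun, nthDigit]

lemma T_succ (n i : ℕ) : Tfun n (i+1) = (Tfun n i + nthDigit 2 n (i+1)) % 2 := by
  unfold Tfun
  rw [Finset.sum_Icc_succ_top (by omega : 1 ≤ i + 1)]
  have h := dg_le_one n (i+1)
  generalize (∑ j ∈ Finset.Icc 1 i, nthDigit 2 n j) = S
  omega

lemma dg_eq (n j : ℕ) (hj : 1 ≤ j) : nthDigit 2 n j = n / 2^(j-1) % 2 := by
  unfold nthDigit; rw [if_neg (by omega)]

lemma pair_sum_le (m : ℕ) (f : ℕ → ℕ) (i₀ : ℕ) (h2 : 2 ≤ i₀) (hm : i₀ ≤ m) :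
    f 1 * 2^(m-1) + f i₀ * 2^(m-i₀) ≤ ∑ i ∈ Finset.Icc 1 m, f i * 2^(m-i) := by
  have hsub : ({1, i₀} : Finset ℕ) ⊆ Finset.Icc 1 m := by
    intro x hx; simp only [Finset.mem_insert, Finset.mem_singleton] at hx
    simp only [Finset.mem_Icc]; omega
  have := Finset.sum_le_sum_of_subset (f := fun i => f i * 2^(m-i)) hsub
  rwa [Finset.sum_pair (by omega : (1:ℕ) ≠ i₀)] at this

lemma tail_sum_le (m k : ℕ) (f : ℕ → ℕ) (hk : 1 ≤ k) (hkm : k ≤ m)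
    (hf : ∀ i, k+1 ≤ i → i ≤ m → f i = 1) (h1 : f 1 = 1) :
    2^(m-1) + (2^(m-k) - 1) ≤ ∑ i ∈ Finset.Icc 1 m, f i * 2^(m-i) := by
  have hsub : insert 1 (Finset.Icc (k+1) m) ⊆ Finset.Icc 1 m := by
    intro x hx; simp only [Finset.mem_insert, Finset.mem_Icc] at hx ⊢; omega
  have hnm : (1:ℕ) ∉ Finset.Icc (k+1) m := by simp only [Finset.mem_Icc]; omega
  have hle := Finset.sum_le_sum_of_subset (f := fun i => f i * 2^(m-i)) hsub
  rw [Finset.sum_insert hnm] at hle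
  have heq : ∑ i ∈ Finset.Icc (k+1) m, f i * 2^(m-i)
      = ∑ i ∈ Finset.Icc (k+1) m, 2^(m-i) := by
    refine Finset.sum_congr rfl fun i hi => ?_
    simp only [Finset.mem_Icc] at hi
    rw [hf i hi.1 hi.2, one_mul]
  rw [heq, sum_Icc_pow k m hkm, h1, one_mul] at hle
  exact hle

lemma compl_sum (m n : ℕ) :
    Ynat m n + ∑ i ∈ Finset.Icc 1 m, (1 - Tfun n i) * 2^(m-i) = 2^m - 1 := by
  unfold Ynat
  rw [← Finset.sum_add_distrib, ← total_pow m]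
  refine Finset.sum_congr rfl fun i _ => ?_
  have h := T_le_one n i
  rcases Nat.le_one_iff_eq_zero_or_eq_one.mp h with h | h <;> rw [h] <;> simp

lemma key_dichotomy (m k n : ℕ) (hk2 : 2 ≤ k) (hkm : k + 2 ≤ m)
    (hn4 : 4 ≤ n) (hn : n ≤ 2^(k+1)+1) :
    Ynat m n ≤ 2^(m-1) - 2^(m-k) ∨ 2^(m-1) + 2^(m-k) - 1 ≤ Ynat m n := by
  have h4k : 4 ≤ 2^k := by calc (4:ℕ) = 2^2 := rfl
                                _ ≤ 2^k := Nat.pow_le_pow_right (by norm_num) hk2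
  have hpk1 : 2^(k+1) = 2 * 2^k := by ring
  have hmk1 : 2^(m-k) ≤ 2^(m-1) := Nat.pow_le_pow_right (by norm_num) (by omega)
  have hm2 : 2^m = 2 * 2^(m-1) := by
    rw [← pow_succ']; congr 1; omega
  -- digit recurrences
  have hT1 : Tfun n 1 = n % 2 := T_one n
  have hTs : ∀ i, Tfun n (i+1) = (Tfun n i + nthDigit 2 n (i+1)) % 2 := T_succ n
  rcases Nat.even_or_odd n with hpar | hpar
  · -- n even : left branch
    have hn2 : n % 2 = 0 := Nat.even_iff.mp hpar
    have hT1' : Tfun n 1 = 0 := by rw [hT1, hn2]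
    left
    by_cases hex : ∃ i₀, 2 ≤ i₀ ∧ i₀ ≤ k ∧ Tfun n i₀ = 0
    · obtain ⟨i₀, hi2, hik, hTi⟩ := hex
      have hp := pair_sum_le m (fun i => 1 - Tfun n i) i₀ hi2 (by omega)
      beta_reduce at hp
      rw [hT1', hTi] at hp
      norm_num at hp
      have hc := compl_sum m n
      have hik' : 2^(m-k) ≤ 2^(m-i₀) := Nat.pow_le_pow_right (by norm_num) (by omega)
      omega
    · push_neg at hex
      have hTall : ∀ i, 2 ≤ i → i ≤ k → Tfun n i = 1 := by
        intro i h1 h2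
        have ha := T_le_one n i
        have hb := hex i h1 h2
        omega
      have hd2 : nthDigit 2 n 2 = 1 := by
        have h := hTs 1
        norm_num at h
        rw [hTall 2 le_rfl hk2, hT1'] at h
        have := dg_le_one n 2
        omega
      have hd3 : ∀ j, 3 ≤ j → j ≤ k → nthDigit 2 n j = 0 := by
        intro j h3 hjk
        have h := hTs (j-1)
        rw [show j - 1 + 1 = j from by omega] at h
        rw [hTall j (by omega) hjk, hTall (j-1) (by omega) (by omega)] at h
        have := dg_le_one n j
        omega
      have hmod : ∀ j, 2 ≤ j → j ≤ k → n % 2^j = 2 := by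
        intro j
        induction j with
        | zero => omega
        | succ j ih =>
          intro hj2 hjk
          rcases Nat.lt_or_ge j 2 with h | h
          · have hj1 : j = 1 := by omega
            subst hj1
            have e2 : n / 2 % 2 = 1 := by
              have h2 := hd2; rw [dg_eq n 2 (by omega)] at h2; simpa using h2
            show n % 4 = _
            omega
          · have hprev := ih h (by omega)
            have hsplit : n % 2^(j+1) = n % 2^j + 2^j * (n / 2^j % 2) := by
              rw [pow_succ, Nat.mod_mul]
            have hd : n / 2^j % 2 = 0 := by
              have h3 := hd3 (j+1) (by omega) hjk
              rw [dg_eq n (j+1) (by omega)] at h3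
              simpa using h3
            rw [hsplit, hprev, hd]
            omega
      have hnk : n % 2^k = 2 := hmod k hk2 le_rfl
      have hneq : n = 2^k + 2 := by
        have hdm := Nat.div_add_mod n (2^k)
        rw [hnk] at hdm
        obtain ⟨q, hq⟩ : ∃ q, n / 2^k = q := ⟨_, rfl⟩
        rw [hq] at hdm
        have hq2 : q < 3 := by
          rw [← hq, Nat.div_lt_iff_lt_mul (by positivity)]
          omega
        interval_cases q <;> omega
      subst hneq
      have hdk1 : nthDigit 2 (2^k+2) (k+1) = 1 := by
        rw [dg_eq _ _ (by omega)]
        simp only [Nat.add_sub_cancel]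
        have hdiv : (2^k+2) / 2^k = 1 :=
          Nat.div_eq_of_lt_le (by omega) (by omega)
        rw [hdiv]
      have hdtail : ∀ j, k+2 ≤ j → nthDigit 2 (2^k+2) j = 0 := by
        intro j hj
        rw [dg_eq _ _ (by omega)]
        have hlt : 2^k + 2 < 2^(j-1) := by
          have : 2^(k+1) ≤ 2^(j-1) := Nat.pow_le_pow_right (by norm_num) (by omega)
          omega
        rw [Nat.div_eq_of_lt hlt]
      have hTk1 : Tfun (2^k+2) (k+1) = 0 := by
        rw [hTs k, hTall k hk2 le_rfl, hdk1]
      have hTtail : ∀ i, k+1 ≤ i → i ≤ m → Tfun (2^k+2) i = 0 := by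
        intro i
        induction i with
        | zero => omega
        | succ i ih =>
          intro hi him
          rcases Nat.lt_or_ge i (k+1) with h | h
          · have : i = k := by omega
            subst this; exact hTk1
          · rw [hTs i, ih h (by omega), hdtail (i+1) (by omega)]
      have ht := tail_sum_le m k (fun i => 1 - Tfun (2^k+2) i) (by omega) (by omega)
        (fun i h1 h2 => by show 1 - Tfun _ i = 1; rw [hTtail i h1 h2]) (by show 1 - Tfun _ 1 = 1; rw [hT1'])
      beta_reduce at ht
      have hc := compl_sum m (2^k+2)
      omega
  · -- n odd : right branch
    have hn2 : n % 2 = 1 := Nat.odd_iff.mp hpar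
    have hT1' : Tfun n 1 = 1 := by rw [hT1, hn2]
    right
    have hYdef : Ynat m n = ∑ i ∈ Finset.Icc 1 m, Tfun n i * 2^(m-i) := rfl
    by_cases hex : ∃ i₀, 2 ≤ i₀ ∧ i₀ ≤ k ∧ Tfun n i₀ = 1
    · obtain ⟨i₀, hi2, hik, hTi⟩ := hex
      have hp := pair_sum_le m (Tfun n) i₀ hi2 (by omega)
      rw [hT1', hTi] at hp
      norm_num at hp
      have hik' : 2^(m-k) ≤ 2^(m-i₀) := Nat.pow_le_pow_right (by norm_num) (by omega)
      omega
    · push_neg at hex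
      have hTall : ∀ i, 2 ≤ i → i ≤ k → Tfun n i = 0 := by
        intro i h1 h2
        have ha := T_le_one n i
        have hb := hex i h1 h2
        omega
      have hd2 : nthDigit 2 n 2 = 1 := by
        have h := hTs 1
        norm_num at h
        rw [hTall 2 le_rfl hk2, hT1'] at h
        have := dg_le_one n 2
        omega
      have hd3 : ∀ j, 3 ≤ j → j ≤ k → nthDigit 2 n j = 0 := by
        intro j h3 hjk
        have h := hTs (j-1)
        rw [show j - 1 + 1 = j from by omega] at h
        rw [hTall j (by omega) hjk, hTall (j-1) (by omega) (by omega)] at h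
        have := dg_le_one n j
        omega
      have hmod : ∀ j, 2 ≤ j → j ≤ k → n % 2^j = 3 := by
        intro j
        induction j with
        | zero => omega
        | succ j ih =>
          intro hj2 hjk
          rcases Nat.lt_or_ge j 2 with h | h
          · have hj1 : j = 1 := by omega
            subst hj1
            have e2 : n / 2 % 2 = 1 := by
              have h2 := hd2; rw [dg_eq n 2 (by omega)] at h2; simpa using h2
            show n % 4 = _
            omega
          · have hprev := ih h (by omega)
            have hsplit : n % 2^(j+1) = n % 2^j + 2^j * (n / 2^j % 2) := by
              rw [pow_succ, Nat.mod_mul]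
            have hd : n / 2^j % 2 = 0 := by
              have h3 := hd3 (j+1) (by omega) hjk
              rw [dg_eq n (j+1) (by omega)] at h3
              simpa using h3
            rw [hsplit, hprev, hd]
            omega
      have hnk : n % 2^k = 3 := hmod k hk2 le_rfl
      have hneq : n = 2^k + 3 := by
        have hdm := Nat.div_add_mod n (2^k)
        rw [hnk] at hdm
        obtain ⟨q, hq⟩ : ∃ q, n / 2^k = q := ⟨_, rfl⟩
        rw [hq] at hdm
        have hq2 : q < 3 := by
          rw [← hq, Nat.div_lt_iff_lt_mul (by positivity)]
          omega
        interval_cases q <;> omega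
      subst hneq
      have hdk1 : nthDigit 2 (2^k+3) (k+1) = 1 := by
        rw [dg_eq _ _ (by omega)]
        simp only [Nat.add_sub_cancel]
        have hdiv : (2^k+3) / 2^k = 1 :=
          Nat.div_eq_of_lt_le (by omega) (by omega)
        rw [hdiv]
      have hdtail : ∀ j, k+2 ≤ j → nthDigit 2 (2^k+3) j = 0 := by
        intro j hj
        rw [dg_eq _ _ (by omega)]
        have hlt : 2^k + 3 < 2^(j-1) := by
          have : 2^(k+1) ≤ 2^(j-1) := Nat.pow_le_pow_right (by norm_num) (by omega)
          omega
        rw [Nat.div_eq_of_lt hlt]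
      have hTk1 : Tfun (2^k+3) (k+1) = 1 := by
        rw [hTs k, hTall k hk2 le_rfl, hdk1]
      have hTtail : ∀ i, k+1 ≤ i → i ≤ m → Tfun (2^k+3) i = 1 := by
        intro i
        induction i with
        | zero => omega
        | succ i ih =>
          intro hi him
          rcases Nat.lt_or_ge i (k+1) with h | h
          · have : i = k := by omega
            subst this; exact hTk1
          · rw [hTs i, ih h (by omega), hdtail (i+1) (by omega)]
      have ht := tail_sum_le m k (Tfun (2^k+3)) (by omega) (by omega)
        (fun i h1 h2 => hTtail i h1 h2) hT1'
      rw [← hYdef] at ht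
      omega


lemma omega_eq (m n : ℕ) : omegaMap m n = (Ynat m n : ℝ) / 2^m := by
  have h0 : omegaMap m n = ∑ i ∈ Finset.Icc 1 m, (Tfun n i : ℝ) / 2^i := rfl
  rw [h0]
  unfold Ynat
  rw [Nat.cast_sum, Finset.sum_div]
  refine Finset.sum_congr rfl fun i hi => ?_
  simp only [Finset.mem_Icc] at hi
  have h2 : (2:ℝ)^(m-i) * 2^i = 2^m := by rw [← pow_add]; congr 1; omega
  push_cast
  rw [div_eq_div_iff (by positivity) (by positivity), mul_assoc, h2]

lemma Fval (m k : ℕ) (hk : 1 ≤ k) :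
    ((2:ℝ)^(k+1) - 1) / (2:ℝ)^m * (1/(2:ℝ)^(k-1) - 1/(2:ℝ)^m)
      = (4 - 2*(2:ℝ)^k/2^m - 2/(2:ℝ)^k + 1/(2:ℝ)^m)/(2:ℝ)^m := by
  have h1 : (2:ℝ)^(k-1) * 2 = 2^k := by rw [← pow_succ]; congr 1; omega
  have hk0 : (0:ℝ) < (2:ℝ)^k := by positivity
  have hk1 : (0:ℝ) < (2:ℝ)^(k-1) := by positivity
  have hm0 : (0:ℝ) < (2:ℝ)^m := by positivity
  have h1' : (1:ℝ)/(2:ℝ)^(k-1) = 2/(2:ℝ)^k := by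
    rw [div_eq_div_iff (ne_of_gt hk1) (ne_of_gt hk0), one_mul, ← h1]; ring
  rw [h1', show (2:ℝ)^(k+1) = 2*2^k from by rw [pow_succ]; ring]
  field_simp
  ring

lemma Fcmp_aux (M A B : ℝ) (hM : 0 < M) (hA : 0 < A) (hB : 0 < B)
    (h : 0 ≤ (A - B) * (A*B - M)) :
    (4 - 2*A/M - 2/A + 1/M)/M ≤ (4 - 2*B/M - 2/B + 1/M)/M := by
  have key : 2*B/M + 2/B ≤ 2*A/M + 2/A := by
    rw [div_add_div _ _ (ne_of_gt hM) (ne_of_gt hB),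
        div_add_div _ _ (ne_of_gt hM) (ne_of_gt hA),
        div_le_div_iff₀ (by positivity) (by positivity)]
    nlinarith [mul_nonneg (le_of_lt hM) h]
  exact (div_le_div_iff_of_pos_right hM).mpr (by linarith)

set_option maxHeartbeats 1000000 in
/-- Lower bound for the dispersion of `P_m^L = {(n/2^m, ω(n))}` for `m ≥ 4`:
`disp(P_m^L) ≥ max_{k=2,…,m−2} ((2^{k+1}−1)/2^m)(1/2^{k−1} − 1/2^m)`, and this maximum
has the stated closed forms according to the parity of `m`. -/
theorem disp_PL_ge (m : ℕ) (hm : 4 ≤ m) (P : Set (ℝ × ℝ))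
    (hP : P = {p : ℝ × ℝ | ∃ n : ℕ, n < 2 ^ m ∧ p = ((n : ℝ) / (2 : ℝ) ^ m, omegaMap m n)}) :
    disp P ≥ (Finset.Icc 2 (m - 2)).sup' (Finset.nonempty_Icc.mpr (by omega))
        (fun k => ((2 : ℝ) ^ (k + 1) - 1) / (2 : ℝ) ^ m *
          (1 / (2 : ℝ) ^ (k - 1) - 1 / (2 : ℝ) ^ m)) ∧
    (Even m →
      (Finset.Icc 2 (m - 2)).sup' (Finset.nonempty_Icc.mpr (by omega))
        (fun k => ((2 : ℝ) ^ (k + 1) - 1) / (2 : ℝ) ^ m *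
          (1 / (2 : ℝ) ^ (k - 1) - 1 / (2 : ℝ) ^ m)) =
      1 / (2 : ℝ) ^ m * (4 - 4 / (2 : ℝ) ^ (m / 2) + 1 / (2 : ℝ) ^ m)) ∧
    (Odd m →
      (Finset.Icc 2 (m - 2)).sup' (Finset.nonempty_Icc.mpr (by omega))
        (fun k => ((2 : ℝ) ^ (k + 1) - 1) / (2 : ℝ) ^ m *
          (1 / (2 : ℝ) ^ (k - 1) - 1 / (2 : ℝ) ^ m)) =
      1 / (2 : ℝ) ^ m * (4 - 3 / (2 : ℝ) ^ ((m - 1) / 2) + 1 / (2 : ℝ) ^ m)) := by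
  subst hP
  have hm0 : (0:ℝ) < (2:ℝ)^m := by positivity
  refine ⟨?_, ?_, ?_⟩
  · -- dispersion lower bound
    rw [ge_iff_le]
    apply Finset.sup'_le
    intro k hk
    simp only [Finset.mem_Icc] at hk
    obtain ⟨hk2, hkm2⟩ := hk
    have hkm : k + 2 ≤ m := by omega
    -- nat facts
    have hmk1 : 2^(m-k) ≤ 2^(m-1) := Nat.pow_le_pow_right (by norm_num) (by omega)
    have hm2n : (2:ℕ)^m = 2*2^(m-1) := by rw [← pow_succ']; congr 1; omega
    have h4mk : 4 ≤ 2^(m-k) := by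
      calc (4:ℕ) = 2^2 := rfl
        _ ≤ 2^(m-k) := Nat.pow_le_pow_right (by norm_num) (by omega)
    set c : ℕ := 2^(m-1) - 2^(m-k) with hc
    set d : ℕ := 2^(m-1) + 2^(m-k) - 1 with hd
    -- real pow facts
    have e1 : (2:ℝ)^(m-1) * 2 = 2^m := by rw [← pow_succ]; congr 1; omega
    have e2 : (2:ℝ)^(m-k) ≤ 2^(m-1) := pow_le_pow_right₀ one_le_two (by omega)
    have e3 : (2:ℝ)^(k+1) ≤ 2^(m-1) := pow_le_pow_right₀ one_le_two (by omega)
    have e4 : (2:ℝ) ≤ 2^(m-1) := by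
      calc (2:ℝ) = 2^1 := (pow_one 2).symm
        _ ≤ 2^(m-1) := pow_le_pow_right₀ one_le_two (by omega)
    have e5 : (1:ℝ) ≤ 2^(m-k) := by
      calc (1:ℝ) = 2^0 := rfl
        _ ≤ 2^(m-k) := pow_le_pow_right₀ one_le_two (by omega)
    have e6 : (2:ℝ) ≤ 2^(k+1) := by
      calc (2:ℝ) = 2^1 := (pow_one 2).symm
        _ ≤ 2^(k+1) := pow_le_pow_right₀ one_le_two (by omega)
    have e7 : (2:ℝ)^(k-1) * 2 = 2^k := by rw [← pow_succ]; congr 1; omega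
    have e8 : (2:ℝ)^(k-1) * (2 * 2^(m-k)) = 2^m := by
      rw [← mul_assoc, e7, ← pow_add]; congr 1; omega
    have hcR : (c:ℝ) = 2^(m-1) - 2^(m-k) := by
      rw [hc, Nat.cast_sub hmk1]; push_cast; ring
    have hdR : (d:ℝ) = 2^(m-1) + 2^(m-k) - 1 := by
      rw [hd, Nat.cast_sub (by omega)]; push_cast; ring
    have hne : (emptyBoxAreas
        {p : ℝ × ℝ | ∃ n : ℕ, n < 2 ^ m ∧ p = ((n : ℝ) / (2 : ℝ) ^ m, omegaMap m n)}).Nonempty := by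
      refine ⟨0, 0, 0, 0, 0, le_refl _, le_refl _, zero_le_one, le_refl _, le_refl _,
        zero_le_one, ?_, by ring⟩
      intro p _ hmem
      simp at hmem
    have hbdd : BddAbove (emptyBoxAreas
        {p : ℝ × ℝ | ∃ n : ℕ, n < 2 ^ m ∧ p = ((n : ℝ) / (2 : ℝ) ^ m, omegaMap m n)}) := by
      refine ⟨1, ?_⟩
      rintro A ⟨x₁, y₁, x₂, y₂, h0, h1, h2, h3, h4, h5, _, rfl⟩
      nlinarith
    show _ ≤ disp _
    rw [disp, le_csSup_iff hbdd hne]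
    intro b hb
    refine le_of_forall_pos_le_add fun ε hε => ?_
    set δ : ℝ := min (ε/2) (1/2^m) with hδ
    have hδ0 : 0 < δ := lt_min (by linarith) (by positivity)
    have hδm : δ ≤ 1/2^m := min_le_right _ _
    have hδε : δ ≤ ε/2 := min_le_left _ _
    have hδt : δ * 2^m ≤ 1 := (le_div_iff₀ hm0).mp hδm
    -- the box
    set x₁ : ℝ := 3/2^m + δ with hx₁
    set y₁ : ℝ := ((2:ℝ)^(k+1) + 2)/2^m with hy₁
    set x₂ : ℝ := (c:ℝ)/2^m + δ with hx₂
    set y₂ : ℝ := (d:ℝ)/2^m with hy₂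
    have hdiv : ∀ a e : ℝ, a + δ * 2^m ≤ e → a/2^m + δ ≤ e/2^m := by
      intro a e h
      have h2 := (div_le_div_iff_of_pos_right hm0).mpr h
      rwa [add_div, mul_div_cancel_right₀ _ (ne_of_gt hm0)] at h2
    have hAmem : (y₁ - x₁) * (y₂ - x₂) ∈ emptyBoxAreas
        {p : ℝ × ℝ | ∃ n : ℕ, n < 2 ^ m ∧ p = ((n : ℝ) / (2 : ℝ) ^ m, omegaMap m n)} := by
      refine ⟨x₁, y₁, x₂, y₂, ?_, ?_, ?_, ?_, ?_, ?_, ?_, rfl⟩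
      · have : (0:ℝ) ≤ 3/2^m := by positivity
        rw [hx₁]; linarith
      · rw [hx₁, hy₁]; exact hdiv 3 _ (by linarith)
      · rw [hy₁, div_le_one hm0]; linarith
      · have : (0:ℝ) ≤ (c:ℝ)/2^m := by positivity
        rw [hx₂]; linarith
      · rw [hx₂, hy₂]; exact hdiv _ _ (by rw [hcR, hdR]; linarith)
      · rw [hy₂, div_le_one hm0, hdR]; linarith
      · rintro p ⟨n, hn, rfl⟩ hmem
        simp only [Set.mem_prod, Set.mem_Ico] at hmem
        obtain ⟨⟨hxa, hxb⟩, ⟨hya, hyb⟩⟩ := hmem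
        rw [hx₁] at hxa; rw [hy₁] at hxb; rw [hx₂] at hya; rw [hy₂] at hyb
        have hn4 : 4 ≤ n := by
          have h3 : (3:ℝ)/2^m < (n:ℝ)/2^m := by linarith
          have h3' : (3:ℝ) < n := by
            have := (div_lt_div_iff_of_pos_right hm0).mp h3
            exact this
          have : (3:ℕ) < n := by exact_mod_cast h3'
          omega
        have hnub : n ≤ 2^(k+1) + 1 := by
          have h3 : (n:ℝ) < 2^(k+1) + 2 := by
            have := (div_lt_div_iff_of_pos_right hm0).mp hxb
            linarith
          have : (n:ℝ) < ((2^(k+1) + 2 : ℕ):ℝ) := by push_cast; linarith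
          have := Nat.cast_lt.mp this
          omega
        rw [omega_eq m n] at hya hyb
        have hcY : c < Ynat m n := by
          have h3 : (c:ℝ)/2^m < (Ynat m n:ℝ)/2^m := by linarith
          exact_mod_cast (div_lt_div_iff_of_pos_right hm0).mp h3
        have hYd : Ynat m n < d := by
          exact_mod_cast (div_lt_div_iff_of_pos_right hm0).mp hyb
        rcases key_dichotomy m k n hk2 hkm hn4 hnub with h | h <;> omega
    have hAb := hb hAmem
    -- area arithmetic
    set U : ℝ := ((2:ℝ)^(k+1) - 1)/2^m with hU
    set V : ℝ := (2*(2:ℝ)^(m-k) - 1)/2^m with hV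
    have hexp : U * V = (y₁-x₁)*(y₂-x₂) + δ*U + δ*V - δ*δ := by
      rw [hU, hV, hx₁, hy₁, hx₂, hy₂, hcR, hdR]
      ring
    have hU1 : U ≤ 1 := by
      rw [hU, div_le_one hm0]; linarith
    have hV1 : V ≤ 1 := by
      rw [hV, div_le_one hm0]; linarith
    have hFk : ((2:ℝ)^(k+1) - 1) / (2:ℝ)^m * (1/(2:ℝ)^(k-1) - 1/(2:ℝ)^m) = U * V := by
      have h1 : (1:ℝ)/(2:ℝ)^(k-1) = (2*2^(m-k))/2^m := by
        rw [div_eq_div_iff (by positivity) (by positivity), one_mul]; linear_combination -e8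
      rw [h1, div_sub_div_same, hU, hV]
    rw [hFk]
    have p1 : 0 ≤ δ*(1-U) := mul_nonneg hδ0.le (by linarith)
    have p2 : 0 ≤ δ*(1-V) := mul_nonneg hδ0.le (by linarith)
    have p3 : 0 ≤ δ*δ := mul_nonneg hδ0.le hδ0.le
    linarith [hAb, hexp, p1, p2, p3, hδε]
  · intro hEven
    have hm' : m % 2 = 0 := Nat.even_iff.mp hEven
    have hmem : m/2 ∈ Finset.Icc 2 (m-2) := Finset.mem_Icc.mpr (by omega)
    have hsq : (2:ℝ)^(m/2) * 2^(m/2) = 2^m := by rw [← pow_add]; congr 1; omega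
    have hval : ((2:ℝ)^(m/2+1) - 1)/(2:ℝ)^m * (1/(2:ℝ)^(m/2-1) - 1/(2:ℝ)^m)
        = 1 / (2:ℝ)^m * (4 - 4/(2:ℝ)^(m/2) + 1/(2:ℝ)^m) := by
      rw [Fval m (m/2) (by omega), ← hsq]
      have hpos : (0:ℝ) < 2^(m/2) := by positivity
      field_simp
      ring
    refine le_antisymm (Finset.sup'_le _ _ ?_) ?_
    · intro k hk
      simp only [Finset.mem_Icc] at hk
      rw [← hval, Fval m k (by omega), Fval m (m/2) (by omega)]
      apply Fcmp_aux _ _ _ (by positivity) (by positivity) (by positivity)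
      rcases le_or_gt k (m/2) with h | h
      · have h1 : (2:ℝ)^k ≤ 2^(m/2) := pow_le_pow_right₀ one_le_two h
        have h2 : (2:ℝ)^k * 2^(m/2) ≤ 2^m := by
          rw [← pow_add]; exact pow_le_pow_right₀ one_le_two (by omega)
        nlinarith
      · have h1 : (2:ℝ)^(m/2) ≤ 2^k := pow_le_pow_right₀ one_le_two h.le
        have h2 : (2:ℝ)^m ≤ 2^k * 2^(m/2) := by
          rw [← pow_add]; exact pow_le_pow_right₀ one_le_two (by omega)
        nlinarith
    · rw [← hval]
      exact Finset.le_sup' (fun k : ℕ => ((2:ℝ)^(k+1) - 1)/(2:ℝ)^m * (1/(2:ℝ)^(k-1) - 1/(2:ℝ)^m)) hmem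
  · intro hOdd
    have hm' : m % 2 = 1 := Nat.odd_iff.mp hOdd
    have hmem : (m-1)/2 ∈ Finset.Icc 2 (m-2) := Finset.mem_Icc.mpr (by omega)
    have hsq : (2:ℝ)^((m-1)/2) * ((2:ℝ)^((m-1)/2) * 2) = 2^m := by
      rw [← pow_succ, ← pow_add]; congr 1; omega
    have hval : ((2:ℝ)^((m-1)/2+1) - 1)/(2:ℝ)^m * (1/(2:ℝ)^((m-1)/2-1) - 1/(2:ℝ)^m)
        = 1 / (2:ℝ)^m * (4 - 3/(2:ℝ)^((m-1)/2) + 1/(2:ℝ)^m) := by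
      rw [Fval m ((m-1)/2) (by omega), ← hsq]
      have hpos : (0:ℝ) < 2^((m-1)/2) := by positivity
      field_simp
      ring
    refine le_antisymm (Finset.sup'_le _ _ ?_) ?_
    · intro k hk
      simp only [Finset.mem_Icc] at hk
      rw [← hval, Fval m k (by omega), Fval m ((m-1)/2) (by omega)]
      apply Fcmp_aux _ _ _ (by positivity) (by positivity) (by positivity)
      rcases le_or_gt k ((m-1)/2) with h | h
      · have h1 : (2:ℝ)^k ≤ 2^((m-1)/2) := pow_le_pow_right₀ one_le_two h
        have h2 : (2:ℝ)^k * 2^((m-1)/2) ≤ 2^m := by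
          rw [← pow_add]; exact pow_le_pow_right₀ one_le_two (by omega)
        nlinarith
      · have h1 : (2:ℝ)^((m-1)/2) ≤ 2^k := pow_le_pow_right₀ one_le_two h.le
        have h2 : (2:ℝ)^m ≤ 2^k * 2^((m-1)/2) := by
          rw [← pow_add]; exact pow_le_pow_right₀ one_le_two (by omega)
        nlinarith
    · rw [← hval]
      exact Finset.le_sup' (fun k : ℕ => ((2:ℝ)^(k+1) - 1)/(2:ℝ)^m * (1/(2:ℝ)^(k-1) - 1/(2:ℝ)^m)) hmem
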